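/- arXiv:2108.00230 — 4 statements merged into one kernel-verified Lean document; each statement's English description precedes it below -/
import Mathlib

section
/- Let u_1 ≥ u_2 ≥ ... ≥ u_{2N} ≥ 0. Among all perfect matchings m of the set {1,...,2N} (partitions into N unordered pairs), the matching {(1,2),(3,4),...,(2N-1,2N)} maximizes ∑_{(i,j)∈m} u_i u_j. -/
/-!
Abel summation in both factors: with `Δ s = u s - u (s + 1) ≥ 0` (and `u` extended by `0` past
`2N`), `∑ i, u i * u (f i) = ∑ s t, #{i | i ≤ s, f i ≤ t} * Δ s * Δ t`, so it suffices to compare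
these counts with those of the pairing `2k ↔ 2k+1`. The latter equal `min s t + 1`, the trivial
upper bound, except for `s = t` even, where they equal `s`; but then `{i | i ≤ s, f i ≤ s}` is
`f`-invariant, so the fixed-point-free involution `f` splits it into pairs, and its size is even,
hence at most `s`.
-/

open Finset

namespace RankOneMatching

section Counting

variable {n : ℕ}

def lowerCount (f : Fin n → Fin n) (s t : ℕ) : ℕ :=
  #{i : Fin n | (i : ℕ) ≤ s ∧ (f i : ℕ) ≤ t}

lemma card_filter_val_le (s : ℕ) : #{i : Fin n | (i : ℕ) ≤ s} = min n (s + 1) := by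
  simp_rw [← Nat.lt_succ_iff]
  exact Fin.card_filter_val_lt

lemma lowerCount_le_succ (f : Fin n → Fin n) (s t : ℕ) : lowerCount f s t ≤ s + 1 :=
  calc lowerCount f s t ≤ #{i : Fin n | (i : ℕ) ≤ s} :=
        card_le_card (monotone_filter_right univ fun _ _ h => h.1)
    _ ≤ s + 1 := (card_filter_val_le s).trans_le (min_le_right _ _)

lemma lowerCount_comm {f : Fin n → Fin n} (hf : Function.Involutive f) (s t : ℕ) :
    lowerCount f s t = lowerCount f t s := by
  refine card_bij' (fun i _ => f i) (fun i _ => f i) ?_ ?_ (fun i _ => hf i) (fun i _ => hf i) <;>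
  · intro i hi
    simp only [mem_filter, mem_univ, true_and, hf i] at hi ⊢
    exact hi.symm

lemma even_lowerCount_self {f : Fin n → Fin n} (hf : Function.Involutive f)
    (hfix : ∀ i, f i ≠ i) (s : ℕ) : Even (lowerCount f s s) := by
  rw [← ZMod.natCast_eq_zero_iff_even, lowerCount, card_eq_sum_ones, Nat.cast_sum]
  refine sum_involution (fun i _ => f i) (fun i _ => ?_) (fun i _ _ => hfix i) (fun i hi => ?_)
    (fun i _ => hf i)
  · simp only [Nat.cast_one]; decide
  · simp only [mem_filter, mem_univ, true_and, hf i] at hi ⊢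
    exact hi.symm

end Counting

def pairSwap (N : ℕ) (i : Fin (2 * N)) : Fin (2 * N) :=
  ⟨if (i : ℕ) % 2 = 0 then (i : ℕ) + 1 else (i : ℕ) - 1, by split <;> omega⟩

section PairSwap

variable {N : ℕ}

lemma val_pairSwap (i : Fin (2 * N)) :
    (pairSwap N i : ℕ) = if (i : ℕ) % 2 = 0 then (i : ℕ) + 1 else (i : ℕ) - 1 := rfl

lemma pairSwap_involutive : Function.Involutive (pairSwap N) := by
  intro i
  ext
  simp only [val_pairSwap]
  split_ifs <;> omega

lemma lowerCount_pairSwap_of_le {s t : ℕ} (hs : s < 2 * N) (hst : s ≤ t) (h : s < t ∨ s % 2 = 1) :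
    lowerCount (pairSwap N) s t = s + 1 := by
  have hset : ({i : Fin (2 * N) | (i : ℕ) ≤ s ∧ (pairSwap N i : ℕ) ≤ t} : Finset _) =
      ({i : Fin (2 * N) | (i : ℕ) ≤ s} : Finset _) := by
    ext i
    rw [mem_filter_univ, mem_filter_univ, val_pairSwap]
    split_ifs <;> omega
  rw [lowerCount, hset, card_filter_val_le, min_eq_right hs]

lemma lowerCount_pairSwap_self_of_even {s : ℕ} (hs : s < 2 * N) (he : s % 2 = 0) :
    lowerCount (pairSwap N) s s = s := by
  have hset : ({i : Fin (2 * N) | (i : ℕ) ≤ s ∧ (pairSwap N i : ℕ) ≤ s} : Finset _) =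
      ({i : Fin (2 * N) | (i : ℕ) < s} : Finset _) := by
    ext i
    rw [mem_filter_univ, mem_filter_univ, val_pairSwap]
    split_ifs <;> omega
  rw [lowerCount, hset, Fin.card_filter_val_lt, min_eq_right hs.le]

lemma lowerCount_le_lowerCount_pairSwap {f : Fin (2 * N) → Fin (2 * N)}
    (hf : Function.Involutive f) (hfix : ∀ i, f i ≠ i) {s t : ℕ} (hs : s < 2 * N) (ht : t < 2 * N) :
    lowerCount f s t ≤ lowerCount (pairSwap N) s t := by
  wlog hst : s ≤ t generalizing s t
  · rw [lowerCount_comm hf, lowerCount_comm pairSwap_involutive]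
    exact this ht hs (le_of_not_ge hst)
  obtain hlt | rfl := hst.lt_or_eq
  · rw [lowerCount_pairSwap_of_le hs hst (.inl hlt)]
    exact lowerCount_le_succ f s t
  obtain he | ho := Nat.mod_two_eq_zero_or_one s
  · rw [lowerCount_pairSwap_self_of_even hs he]
    have hle := lowerCount_le_succ f s s
    have heven := Nat.even_iff.1 (even_lowerCount_self hf hfix s)
    omega
  · rw [lowerCount_pairSwap_of_le hs le_rfl (.inr ho)]
    exact lowerCount_le_succ f s s

lemma two_mul_val_lt (k : Fin N) : 2 * (k : ℕ) < 2 * N := by omega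

lemma two_mul_val_add_one_lt (k : Fin N) : 2 * (k : ℕ) + 1 < 2 * N := by omega

lemma pairSwap_two_mul (k : Fin N) :
    pairSwap N ⟨2 * k, two_mul_val_lt k⟩ = ⟨2 * k + 1, two_mul_val_add_one_lt k⟩ := by
  ext; simp [val_pairSwap]

lemma pairSwap_two_mul_add_one (k : Fin N) :
    pairSwap N ⟨2 * k + 1, two_mul_val_add_one_lt k⟩ = ⟨2 * k, two_mul_val_lt k⟩ := by
  ext; simp [val_pairSwap]

end PairSwap

lemma sum_univ_fin_two_mul {M : Type*} [AddCommMonoid M] {N : ℕ} (F : Fin (2 * N) → M) :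
    ∑ i, F i =
      ∑ k : Fin N, (F ⟨2 * k, two_mul_val_lt k⟩ + F ⟨2 * k + 1, two_mul_val_add_one_lt k⟩) := by
  rw [← (finProdFinEquiv.trans (finCongr (mul_comm N 2))).sum_comp, Fintype.sum_prod_type]
  refine sum_congr rfl fun k _ => ?_
  rw [Fin.sum_univ_two]
  congr 2 <;> ext <;> simp [finProdFinEquiv]; ring

section LayerCake

variable {n : ℕ} (v : ℕ → ℝ)

lemma eq_sum_range_ite_sub_succ (hv : v n = 0) {i : ℕ} (hi : i ≤ n) :
    v i = ∑ s ∈ range n, if i ≤ s then v s - v (s + 1) else 0 := by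
  rw [← sum_filter, show (range n).filter (i ≤ ·) = Ico i n by ext; simp [and_comm],
    sum_Ico_eq_sub _ hi, sum_range_sub', sum_range_sub', hv]
  ring

lemma sum_mul_comp_eq_sum_lowerCount (hv : v n = 0) (g : Fin n → Fin n) :
    ∑ i : Fin n, v i * v (g i) = ∑ s ∈ range n, ∑ t ∈ range n,
      (lowerCount g s t : ℝ) * ((v s - v (s + 1)) * (v t - v (t + 1))) := by
  have h (i : Fin n) : v i * v (g i) = ∑ s ∈ range n, ∑ t ∈ range n,
      if (i : ℕ) ≤ s ∧ (g i : ℕ) ≤ t then (v s - v (s + 1)) * (v t - v (t + 1)) else 0 := by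
    rw [eq_sum_range_ite_sub_succ v hv i.isLt.le, eq_sum_range_ite_sub_succ v hv (g i).isLt.le,
      sum_mul_sum]
    simp only [ite_zero_mul_ite_zero]
  simp_rw [h]
  rw [sum_comm]
  refine sum_congr rfl fun s _ => ?_
  rw [sum_comm]
  refine sum_congr rfl fun t _ => ?_
  rw [← sum_filter, sum_const, nsmul_eq_mul]
  rfl

lemma sum_mul_comp_le_of_lowerCount_le (hanti : Antitone v) (hv : v n = 0)
    {f g : Fin n → Fin n} (h : ∀ s < n, ∀ t < n, lowerCount f s t ≤ lowerCount g s t) :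
    ∑ i : Fin n, v i * v (f i) ≤ ∑ i : Fin n, v i * v (g i) := by
  rw [sum_mul_comp_eq_sum_lowerCount v hv, sum_mul_comp_eq_sum_lowerCount v hv]
  gcongr with s hs t ht
  · exact mul_nonneg (sub_nonneg.2 (hanti s.le_succ)) (sub_nonneg.2 (hanti t.le_succ))
  · exact_mod_cast h s (mem_range.1 hs) t (mem_range.1 ht)

end LayerCake

def extendByZero {n : ℕ} (u : Fin n → ℝ) (k : ℕ) : ℝ :=
  if h : k < n then u ⟨k, h⟩ else 0

lemma antitone_extendByZero {n : ℕ} {u : Fin n → ℝ} (hu : Antitone u) (hnn : ∀ i, 0 ≤ u i) :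
    Antitone (extendByZero u) := by
  intro a b hab
  unfold extendByZero
  split_ifs with hb ha ha
  · exact hu (Fin.mk_le_mk.2 hab)
  · omega
  · exact hnn _
  · exact le_rfl

end RankOneMatching

open RankOneMatching in
/-- Monopartite rank-1 matching: for decreasing nonnegative `u`, among all perfect
matchings (fixed-point-free involutions) of `{0,...,2N-1}`, the matching pairing
`2k` with `2k+1` maximizes the total weight `∑ u_i u_{m(i)}` (each pair counted twice). -/
theorem stmt_1 (N : ℕ) (u : Fin (2 * N) → ℝ)
    (hmono : Antitone u) (hnn : ∀ i, 0 ≤ u i)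
    (f : Fin (2 * N) → Fin (2 * N)) (hinv : ∀ i, f (f i) = i) (hne : ∀ i, f i ≠ i) :
    ∑ i, u i * u (f i) ≤
      ∑ k : Fin N, 2 * (u ⟨2 * k.val, by omega⟩ * u ⟨2 * k.val + 1, by omega⟩) := by
  have hv (i : Fin (2 * N)) : extendByZero u i = u i := dif_pos i.isLt
  calc ∑ i, u i * u (f i) = ∑ i : Fin (2 * N), extendByZero u i * extendByZero u (f i) := by
        simp only [hv]
    _ ≤ ∑ i : Fin (2 * N), extendByZero u i * extendByZero u (pairSwap N i) :=
        sum_mul_comp_le_of_lowerCount_le _ (antitone_extendByZero hmono hnn)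
          (dif_neg (lt_irrefl _)) fun _ hs _ ht => lowerCount_le_lowerCount_pairSwap hinv hne hs ht
    _ = _ := by
        simp only [hv, sum_univ_fin_two_mul, pairSwap_two_mul, pairSwap_two_mul_add_one]
        refine sum_congr rfl fun k _ => ?_
        ring
end

section
/- Let u_1 ≥ ... ≥ u_{2K} ≥ 0 with K ≥ 2. For 1 ≤ i < j ≤ K define r_{i,j} = (u_{2i} − u_{2j-1})(u_{2i-1} − u_{2j}) + (u_{2i-1} − u_{2j-1})(u_{2i} − u_{2j}). Then ∑_{i=k}^{l} u_{2i-1} u_{2i} − (1/(2(2K−1))) ∑_{a=1}^{2K} ∑_{b≠a} u_a u_b = (1/(2K−1)) ∑_{i=1}^{K} ∑_{j=i+1}^{K} r_{i,j}, i.e., the expected per-iteration regret of a round-robin tournament on 2K items equals the average of the inter-pair regrets r_{i,j}. -/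
/-!
With `p i = u (2i-1) u (2i)` and `s i = u (2i-1) + u (2i)`, the round-robin sum of all
`u a u b` with `a ≠ b` is `(∑ s)² - ∑ u a² = (∑ s)² - ∑ (s i² - 2 p i)`, while each regret is
`r i j = 2 p i + 2 p j - s i s j`. Summing the latter over `i < j` gives
`2 (K - 1) ∑ p - ((∑ s)² - ∑ s²) / 2`, and the claim becomes a polynomial identity in
`∑ p`, `∑ s` and `∑ s²`.
-/

open Finset

theorem Finset.sum_Icc_one_two_mul {M : Type*} [AddCommMonoid M] (f : ℕ → M) (K : ℕ) :
    ∑ a ∈ Icc 1 (2 * K), f a = ∑ i ∈ Icc 1 K, (f (2 * i - 1) + f (2 * i)) := by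
  induction K with
  | zero => simp
  | succ K ih =>
    rw [show 2 * (K + 1) = 2 * K + 1 + 1 by ring, sum_Icc_succ_top (by omega),
      sum_Icc_succ_top (by omega), ih, sum_Icc_succ_top (by omega), add_assoc]
    simp [Nat.mul_succ]

theorem Finset.sum_sum_erase_eq_sum_sum_lt {ι M : Type*} [LinearOrder ι] [AddCommMonoid M]
    (s : Finset ι) (g : ι → ι → M) :
    ∑ i ∈ s, ∑ j ∈ s.erase i, g i j = ∑ i ∈ s, ∑ j ∈ s with i < j, (g i j + g j i) := by
  have hsplit (i : ι) : s.erase i = {j ∈ s | i < j} ∪ {j ∈ s | j < i} := by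
    ext j; simp only [mem_erase, mem_union, mem_filter]; grind
  have hdisj (i : ι) : Disjoint {j ∈ s | i < j} {j ∈ s | j < i} :=
    disjoint_filter.2 fun _ _ h h' => lt_asymm h h'
  simp only [hsplit, sum_union (hdisj _), sum_add_distrib]
  congr 1
  exact sum_comm' fun i j => by simp only [mem_filter]; tauto

theorem Finset.sum_sum_erase_mul {ι R : Type*} [DecidableEq ι] [CommRing R]
    (s : Finset ι) (f : ι → R) :
    ∑ i ∈ s, ∑ j ∈ s.erase i, f i * f j = (∑ i ∈ s, f i) ^ 2 - ∑ i ∈ s, f i ^ 2 := by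
  rw [sum_congr rfl fun i hi => by rw [← mul_sum, sum_erase_eq_sub hi]]
  simp only [mul_sub, sum_sub_distrib, ← sum_mul, sq]

theorem Nat.Icc_one_filter_lt (i K : ℕ) : {j ∈ Icc 1 K | i < j} = Icc (i + 1) K := by
  ext j; simp only [mem_filter, mem_Icc]; omega

theorem stmt_6_general (K : ℕ) (u : ℕ → ℝ) :
    (∑ i ∈ Finset.Icc 1 K, u (2 * i - 1) * u (2 * i)) -
        (1 / (2 * (2 * (K : ℝ) - 1))) *
          ∑ a ∈ Finset.Icc 1 (2 * K), ∑ b ∈ (Finset.Icc 1 (2 * K)).erase a, u a * u b =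
      (1 / (2 * (K : ℝ) - 1)) *
        ∑ i ∈ Finset.Icc 1 K, ∑ j ∈ Finset.Icc (i + 1) K,
          ((u (2 * i) - u (2 * j - 1)) * (u (2 * i - 1) - u (2 * j)) +
            (u (2 * i - 1) - u (2 * j - 1)) * (u (2 * i) - u (2 * j))) := by
  set p : ℕ → ℝ := fun i => u (2 * i - 1) * u (2 * i)
  set s : ℕ → ℝ := fun i => u (2 * i - 1) + u (2 * i)
  have hround : ∑ a ∈ Icc 1 (2 * K), ∑ b ∈ (Icc 1 (2 * K)).erase a, u a * u b =
      (∑ i ∈ Icc 1 K, s i) ^ 2 - ∑ i ∈ Icc 1 K, (s i ^ 2 - 2 * p i) := by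
    rw [sum_sum_erase_mul, sum_Icc_one_two_mul, sum_Icc_one_two_mul (fun a => u a ^ 2)]
    congr 1
    exact sum_congr rfl fun i _ => by ring
  have hregret : ∑ i ∈ Icc 1 K, ∑ j ∈ Icc (i + 1) K,
      ((u (2 * i) - u (2 * j - 1)) * (u (2 * i - 1) - u (2 * j)) +
        (u (2 * i - 1) - u (2 * j - 1)) * (u (2 * i) - u (2 * j))) =
      ∑ i ∈ Icc 1 K, ∑ j ∈ (Icc 1 K).erase i, (2 * p i - s i * s j / 2) := by
    rw [sum_sum_erase_eq_sum_sum_lt]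
    refine sum_congr rfl fun i _ => ?_
    rw [Nat.Icc_one_filter_lt]
    exact sum_congr rfl fun j _ => by ring
  have hpairs : ∑ i ∈ Icc 1 K, ∑ j ∈ (Icc 1 K).erase i, (2 * p i - s i * s j / 2) =
      2 * ((K : ℝ) - 1) * ∑ i ∈ Icc 1 K, p i -
        ((∑ i ∈ Icc 1 K, s i) ^ 2 - ∑ i ∈ Icc 1 K, s i ^ 2) / 2 := by
    simp only [sum_sub_distrib, ← sum_div, sum_sum_erase_mul, sum_const]
    congr 1
    rw [mul_sum]
    refine sum_congr rfl fun i hi => ?_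
    have hKpos : 0 < K := by grind
    rw [card_erase_of_mem hi, Nat.card_Icc, Nat.add_sub_cancel, nsmul_eq_mul, Nat.cast_pred hKpos]
    ring
  have hK : 2 * (K : ℝ) - 1 ≠ 0 := by
    refine sub_ne_zero.2 ?_
    exact_mod_cast (by omega : 2 * K ≠ 1)
  rw [hround, hregret, hpairs, sum_sub_distrib, ← mul_sum]
  field_simp
  ring

/-- Round-robin regret decomposition: for decreasing nonnegative `u` (1-indexed) on
`{1,...,2K}`, the optimal per-iteration reward minus the average round-robin reward
equals the average of the inter-pair regrets `r_{i,j}`. -/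
theorem stmt_6 (K : ℕ) (hK : 2 ≤ K) (u : ℕ → ℝ)
    (hmono : ∀ a b, 1 ≤ a → a ≤ b → b ≤ 2 * K → u b ≤ u a)
    (hnn : ∀ a, 1 ≤ a → a ≤ 2 * K → 0 ≤ u a) :
    (∑ i ∈ Finset.Icc 1 K, u (2 * i - 1) * u (2 * i)) -
        (1 / (2 * (2 * (K : ℝ) - 1))) *
          ∑ a ∈ Finset.Icc 1 (2 * K), ∑ b ∈ (Finset.Icc 1 (2 * K)).erase a, u a * u b =
      (1 / (2 * (K : ℝ) - 1)) *
        ∑ i ∈ Finset.Icc 1 K, ∑ j ∈ Finset.Icc (i + 1) K,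
          ((u (2 * i) - u (2 * j - 1)) * (u (2 * i - 1) - u (2 * j)) +
            (u (2 * i - 1) - u (2 * j - 1)) * (u (2 * i) - u (2 * j))) :=
  stmt_6_general K u
end

section
/- Let p, q ∈ [0,1] and α ∈ (0, 1/2] with α ≤ q ≤ 1 − α. Then the binary relative entropy satisfies d(p,q) = p log(p/q) + (1−p) log((1−p)/(1−q)) ≤ (2/α)(p − q)². -/
/-!
Bounding each logarithm by `log t ≤ t - 1` turns the binary relative entropy into the
χ²-divergence `(p - q)² / (q (1 - q))`, and `q (1 - q) ≥ α (1 - α) ≥ α / 2` on `[α, 1 - α]`.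
-/

open Real

lemma mul_log_div_le {x c : ℝ} (hx : 0 ≤ x) (hc : 0 < c) :
    x * log (x / c) ≤ x * (x - c) / c := by
  rcases hx.eq_or_lt with rfl | hx
  · simp
  · calc x * log (x / c) ≤ x * (x / c - 1) :=
          mul_le_mul_of_nonneg_left (log_le_sub_one_of_pos (div_pos hx hc)) hx.le
      _ = x * (x - c) / c := by field_simp

lemma binary_kl_le_chi_sq {p q : ℝ} (hp0 : 0 ≤ p) (hp1 : p ≤ 1) (hq0 : 0 < q) (hq1 : q < 1) :
    p * log (p / q) + (1 - p) * log ((1 - p) / (1 - q)) ≤ (p - q) ^ 2 / (q * (1 - q)) := by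
  have hq1' : 0 < 1 - q := sub_pos.mpr hq1
  calc p * log (p / q) + (1 - p) * log ((1 - p) / (1 - q))
      ≤ p * (p - q) / q + (1 - p) * ((1 - p) - (1 - q)) / (1 - q) :=
        add_le_add (mul_log_div_le hp0 hq0) (mul_log_div_le (sub_nonneg.mpr hp1) hq1')
    _ = (p - q) ^ 2 / (q * (1 - q)) := by field_simp; ring

lemma half_le_mul_one_sub {q α : ℝ} (hα0 : 0 ≤ α) (hα2 : α ≤ 1 / 2) (hq1 : α ≤ q)
    (hq2 : q ≤ 1 - α) : α / 2 ≤ q * (1 - q) := by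
  have hqα : α * (1 - α) ≤ q * (1 - q) := by
    nlinarith [mul_nonneg (sub_nonneg.mpr hq1) (sub_nonneg.mpr hq2)]
  nlinarith

/-- Binary relative entropy bound: for `p, q ∈ [0,1]` and `α ∈ (0, 1/2]` with
`α ≤ q ≤ 1 - α`, `d(p,q) = p log(p/q) + (1-p) log((1-p)/(1-q)) ≤ (2/α)(p-q)²`. -/
theorem stmt_9 (p q α : ℝ) (hp : p ∈ Set.Icc (0 : ℝ) 1)
    (hα : α ∈ Set.Ioc (0 : ℝ) (1 / 2)) (hq1 : α ≤ q) (hq2 : q ≤ 1 - α) :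
    p * Real.log (p / q) + (1 - p) * Real.log ((1 - p) / (1 - q)) ≤
      (2 / α) * (p - q) ^ 2 := by
  obtain ⟨hp0, hp1⟩ := hp
  obtain ⟨hα0, hα2⟩ := hα
  have hvar : α / 2 ≤ q * (1 - q) := half_le_mul_one_sub hα0.le hα2 hq1 hq2
  calc p * log (p / q) + (1 - p) * log ((1 - p) / (1 - q))
      ≤ (p - q) ^ 2 / (q * (1 - q)) := binary_kl_le_chi_sq hp0 hp1 (by linarith) (by linarith)
    _ ≤ (p - q) ^ 2 / (α / 2) := by gcongr
    _ = (2 / α) * (p - q) ^ 2 := by field_simp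
end

section
/- Let u_1 ≥ ... ≥ u_{2N} ≥ 0, fix i < j − 1, let γ = min_{k ∈ {i,...,j−1}} (u_{2k} − u_{2k+2}) (assuming this is a lower bound on consecutive even-index gaps as in the proof), and suppose for all k ∈ {2i−1,...,2j−1} that u_k ≥ u_{2j} + (1/2)Δ_{2j-1,2j} + (1/2)∑_{l=⌈(k+1)/2⌉}^{j-1} γ. Then (2(j−i)+1) μ ≥ (j−i)/2 · Δ_{2j-1,2j} + Δ_{2i-1,2i} + ((j−i−1)²/2) γ, where μ = (1/(2(j−i)+1))(∑_{k=2i-1}^{2j-1} u_k − u_m − u_{m+1}) for any m, m+1 ∈ {2i,...,2j−1}. -/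
/-!
Item `k` of the cluster lies `j - ⌊k/2⌋ - 1` pairs above the last one, and `hlow` bounds it below
by `a + γ/2` times that number, where `a = u_{2j} + Δ_{2j-1,2j}/2`. Summing these levels over
`2i, …, 2j-1` gives `(j-i)(j-i-1)`; removing the two items `m, m+1` costs at most `2(j-i-1)`,
and writing `u_{2i-1} = Δ_{2i-1,2i} + u_{2i}` adds one more level `j-i-1`, for a total of
`(j-i-1)²`. When `γ < 0` monotonicity gives the same bounds with `γ` replaced by `0`.
-/

open Finset

theorem sum_range_two_mul_sub_succ_div_two (n : ℕ) :
    ∑ k ∈ range (2 * n), (n - (k + 2) / 2) = n * (n - 1) := by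
  induction n with
  | zero => simp
  | succ n ih =>
    rw [show 2 * (n + 1) = 2 * n + 1 + 1 by ring, sum_range_succ', sum_range_succ']
    have hshift : ∀ k, n + 1 - (k + 1 + 1 + 2) / 2 = n - (k + 2) / 2 := fun k => by omega
    simp only [hshift, ih]
    cases n <;> grind

theorem sum_Ico_two_mul_sub_succ_div_two {i j : ℕ} (hij : i < j) :
    ∑ k ∈ Ico (2 * i) (2 * j), ((j - (k + 2) / 2 : ℕ) : ℝ) =
      ((j : ℝ) - i) * ((j : ℝ) - i - 1) := by
  have hshift : ∀ k, j - (2 * i + k + 2) / 2 = (j - i) - (k + 2) / 2 := fun k => by omega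
  rw [sum_Ico_eq_sum_range, ← Nat.cast_sum, show 2 * j - 2 * i = 2 * (j - i) by omega]
  simp only [hshift, sum_range_two_mul_sub_succ_div_two]
  push_cast [Nat.cast_sub hij.le, Nat.cast_sub (by omega : 1 ≤ j - i)]
  ring

theorem sum_sub_sub_le_sum_sub_sub {ι M : Type*} [DecidableEq ι] [AddCommGroup M]
    [PartialOrder M] [IsOrderedAddMonoid M] {s : Finset ι} {f g : ι → M} {a b : ι}
    (ha : a ∈ s) (hb : b ∈ s) (hab : a ≠ b) (hfg : ∀ k ∈ s, f k ≤ g k) :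
    ∑ k ∈ s, f k - f a - f b ≤ ∑ k ∈ s, g k - g a - g b := by
  have hb' : b ∈ s.erase a := mem_erase.2 ⟨hab.symm, hb⟩
  rw [← sum_erase_eq_sub ha, ← sum_erase_eq_sub hb', ← sum_erase_eq_sub ha,
    ← sum_erase_eq_sub hb']
  exact sum_le_sum fun k hk => hfg k (mem_of_mem_erase (mem_of_mem_erase hk))

section LevelBound

variable (u : ℕ → ℝ) {a γ : ℝ} (hγ : 0 ≤ γ) {i j m : ℕ} (hm : 2 * i ≤ m) (hm' : m + 1 < 2 * j)
  (hlow : ∀ k ∈ Ico (2 * i) (2 * j), a + γ / 2 * ((j - (k + 2) / 2 : ℕ) : ℝ) ≤ u k)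
include hγ hm hm' hlow

theorem le_sum_Ico_sub_sub :
    (2 * ((j : ℝ) - i) - 2) * a + γ / 2 * (((j : ℝ) - i - 1) * ((j : ℝ) - i - 2)) ≤
      ∑ k ∈ Ico (2 * i) (2 * j), u k - u m - u (m + 1) := by
  have hij : i < j := by omega
  have hmem : ∀ k, 2 * i ≤ k → k < 2 * j → k ∈ Ico (2 * i) (2 * j) :=
    fun k h1 h2 => mem_Ico.2 ⟨h1, h2⟩
  refine le_trans ?_ (sum_sub_sub_le_sum_sub_sub (hmem m hm (by omega))
    (hmem (m + 1) (by omega) hm') m.succ_ne_self.symm hlow)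
  have hlevel : ∀ k, 2 * i ≤ k → ((j - (k + 2) / 2 : ℕ) : ℝ) ≤ (j : ℝ) - i - 1 := fun k hk => by
    rw [← Nat.cast_one, ← Nat.cast_sub hij.le, ← Nat.cast_sub (by omega : 1 ≤ j - i)]
    exact_mod_cast (by omega)
  rw [sum_add_distrib, ← mul_sum, sum_Ico_two_mul_sub_succ_div_two hij, sum_const, Nat.card_Ico,
    nsmul_eq_mul, Nat.cast_sub (by omega)]
  push_cast
  nlinarith [hlevel m hm, hlevel (m + 1) (by omega)]

theorem le_sum_Icc_sub_sub (hi : 1 ≤ i) :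
    u (2 * i - 1) - u (2 * i) + (2 * ((j : ℝ) - i) - 1) * a + γ / 2 * ((j : ℝ) - i - 1) ^ 2 ≤
      ∑ k ∈ Icc (2 * i - 1) (2 * j - 1), u k - u m - u (m + 1) := by
  have hrest := le_sum_Ico_sub_sub u hγ hm hm' hlow
  have htop := hlow (2 * i) (mem_Ico.2 ⟨le_rfl, by omega⟩)
  rw [show j - (2 * i + 2) / 2 = j - i - 1 by omega, Nat.cast_sub (by omega),
    Nat.cast_sub (by omega), Nat.cast_one] at htop
  have hsplit : ∑ k ∈ Icc (2 * i - 1) (2 * j - 1), u k =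
      u (2 * i - 1) + ∑ k ∈ Ico (2 * i) (2 * j), u k := by
    rw [show Icc (2 * i - 1) (2 * j - 1) = Ico (2 * i - 1) (2 * j) by
        ext; simp only [mem_Icc, mem_Ico]; omega,
      sum_eq_sum_Ico_succ_bot (by omega), show 2 * i - 1 + 1 = 2 * i by omega]
  rw [hsplit]
  linarith

end LevelBound

theorem stmt_12_general (N : ℕ) (u : ℕ → ℝ) (γ : ℝ)
    (hmono : ∀ a b, 1 ≤ a → a ≤ b → b ≤ 2 * N → u b ≤ u a)
    (hnn : ∀ a, 1 ≤ a → a ≤ 2 * N → 0 ≤ u a)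
    (i j : ℕ) (hi : 1 ≤ i) (hij : i + 1 < j) (hj : j ≤ N)
    (hlow : ∀ k, 2 * i - 1 ≤ k → k ≤ 2 * j - 1 →
      u (2 * j) + (1 / 2) * (u (2 * j - 1) - u (2 * j)) +
        (1 / 2) * ∑ _l ∈ Finset.Icc ((k + 2) / 2) (j - 1), γ ≤ u k)
    (m : ℕ) (hm1 : 2 * i ≤ m) (hm2 : m + 1 ≤ 2 * j - 1) :
    ((j : ℝ) - i) / 2 * (u (2 * j - 1) - u (2 * j)) +
        (u (2 * i - 1) - u (2 * i)) + (((j : ℝ) - i - 1) ^ 2 / 2) * γ ≤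
      (2 * ((j : ℝ) - i) + 1) *
        ((1 / (2 * ((j : ℝ) - i) + 1)) *
          ((∑ k ∈ Finset.Icc (2 * i - 1) (2 * j - 1), u k) - u m - u (m + 1))) := by
  have hd : (i : ℝ) + 2 ≤ j := by exact_mod_cast hij
  rw [← mul_assoc, mul_one_div_cancel (by linarith), one_mul]
  have hgap : 0 ≤ u (2 * j - 1) - u (2 * j) :=
    sub_nonneg.2 (hmono _ _ (by omega) (by omega) (by omega))
  have hu2j : 0 ≤ u (2 * j) := hnn _ (by omega) (by omega)
  have hlevel : ∀ k ∈ Ico (2 * i) (2 * j), u (2 * j) + 1 / 2 * (u (2 * j - 1) - u (2 * j)) +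
      max γ 0 / 2 * ((j - (k + 2) / 2 : ℕ) : ℝ) ≤ u k := by
    intro k hk
    rw [mem_Ico] at hk
    rcases le_total γ 0 with hγ | hγ
    · have := hmono k (2 * j - 1) (by omega) (by omega) (by omega)
      rw [max_eq_right hγ]
      linarith
    · have := hlow k (by omega) (by omega)
      rw [sum_const, Nat.card_Icc, show j - 1 + 1 - (k + 2) / 2 = j - (k + 2) / 2 by omega,
        nsmul_eq_mul] at this
      rw [max_eq_left hγ]
      linarith
  have hsum := le_sum_Icc_sub_sub u (le_max_right γ 0) hm1 (by omega) hlevel hi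
  have hγ_le : ((j : ℝ) - i - 1) ^ 2 / 2 * γ ≤ max γ 0 / 2 * ((j : ℝ) - i - 1) ^ 2 := by
    nlinarith [le_max_left γ 0, sq_nonneg ((j : ℝ) - i - 1)]
  nlinarith

/-- Mean lower bound ('muLB'): for decreasing nonnegative `u` (1-indexed on `{1,...,2N}`),
`γ` a lower bound on consecutive even-index gaps, and a per-item lower bound
`u_k ≥ u_{2j} + Δ_{2j-1,2j}/2 + (γ/2)·|{⌈(k+1)/2⌉,...,j-1}|`, the sum
`∑_{k=2i-1}^{2j-1} u_k - u_m - u_{m+1}` is at least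
`((j-i)/2) Δ_{2j-1,2j} + Δ_{2i-1,2i} + ((j-i-1)²/2) γ`. -/
theorem stmt_12 (N : ℕ) (u : ℕ → ℝ) (γ : ℝ)
    (hmono : ∀ a b, 1 ≤ a → a ≤ b → b ≤ 2 * N → u b ≤ u a)
    (hnn : ∀ a, 1 ≤ a → a ≤ 2 * N → 0 ≤ u a)
    (i j : ℕ) (hi : 1 ≤ i) (hij : i + 1 < j) (hj : j ≤ N)
    (hγ : ∀ k, i ≤ k → k ≤ j - 1 → γ ≤ u (2 * k) - u (2 * k + 2))
    (hlow : ∀ k, 2 * i - 1 ≤ k → k ≤ 2 * j - 1 →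
      u (2 * j) + (1 / 2) * (u (2 * j - 1) - u (2 * j)) +
        (1 / 2) * ∑ _l ∈ Finset.Icc ((k + 2) / 2) (j - 1), γ ≤ u k)
    (m : ℕ) (hm1 : 2 * i ≤ m) (hm2 : m + 1 ≤ 2 * j - 1) :
    ((j : ℝ) - i) / 2 * (u (2 * j - 1) - u (2 * j)) +
        (u (2 * i - 1) - u (2 * i)) + (((j : ℝ) - i - 1) ^ 2 / 2) * γ ≤
      (2 * ((j : ℝ) - i) + 1) *
        ((1 / (2 * ((j : ℝ) - i) + 1)) *
          ((∑ k ∈ Finset.Icc (2 * i - 1) (2 * j - 1), u k) - u m - u (m + 1))) :=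
  stmt_12_general N u γ hmono hnn i j hi hij hj hlow m hm1 hm2
end
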